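/- For u(z) = log(|z₁|² + |z₂|^{1/2}) on the unit ball B ⊂ ℂ², the sublevel set {u < 2 log R} = {|z₁|² + |z₂|^{1/2} < R²} has volume 2π² ∫_0^R (R² − r²)⁴ r dr = (π²/5) R^{10}, and consequently ν_û(0) = lim_{R→0} 2 log R / ((1/4)(log R^{10} + O(1))) = 4/5 for the Schwarz symmetrization û. -/

import Mathlib

open MeasureTheory Metric Filter Topology
open scoped ENNReal Topology

noncomputable section

abbrev Cn (n : ℕ) := EuclideanSpace ℂ (Fin n)
abbrev Rn (N : ℕ) := EuclideanSpace ℝ (Fin N)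

instance (n : ℕ) : MeasurableSpace (Cn n) := MeasurableSpace.comap WithLp.ofLp MeasurableSpace.pi
instance (n : ℕ) : BorelSpace (Cn n) := PiLp.borelSpace _
instance (n : ℕ) : MeasureSpace (Cn n) := ⟨Measure.map (WithLp.toLp 2) (MeasureTheory.Measure.pi fun _ => volume)⟩

/-- Circle mean of the truncation `max f (-m)` of an `EReal`-valued function. -/
def circleTruncMean (f : ℂ → EReal) (c : ℂ) (r : ℝ) (m : ℕ) : ℝ :=
  (2 * Real.pi)⁻¹ *
    ∫ θ in (0:ℝ)..(2 * Real.pi),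
      (max (f (c + (r : ℂ) * Complex.exp ((θ : ℂ) * Complex.I))) ((-(m : ℝ) : ℝ) : EReal)).toReal

/-- Circle mean of an `EReal`-valued function, as the decreasing limit of truncated means. -/
def circleMean (f : ℂ → EReal) (c : ℂ) (r : ℝ) : EReal :=
  ⨅ m : ℕ, ((circleTruncMean f c r m : ℝ) : EReal)

/-- Subharmonicity (EReal-valued, sub-mean value property) on a subset of ℂ. -/
def SubharmonicOn' (f : ℂ → EReal) (s : Set ℂ) : Prop :=
  UpperSemicontinuousOn f s ∧
    ∀ c r, 0 < r → closedBall c r ⊆ s → f c ≤ circleMean f c r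

/-- Plurisubharmonicity: upper semicontinuity plus the sub-mean value property
along every complex line. -/
def PlurisubharmonicOn {n : ℕ} (u : Cn n → EReal) (s : Set (Cn n)) : Prop :=
  UpperSemicontinuousOn u s ∧
    ∀ (z w : Cn n) (c : ℂ) (r : ℝ), 0 < r →
      (∀ l : ℂ, dist l c ≤ r → z + l • w ∈ s) →
      u (z + c • w) ≤ circleMean (fun l => u (z + l • w)) c r

/-- `S¹`-invariance of `u` on `s` : `u (e^{iθ} z) = u z`. -/
def S1InvariantOn {n : ℕ} (u : Cn n → EReal) (s : Set (Cn n)) : Prop :=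
  ∀ (θ : ℝ), ∀ z ∈ s, u (Complex.exp ((θ : ℂ) * Complex.I) • z) = u z

/-- The Lelong number of `u` at `x`, as `lim_{r→0} (sup_{B_r(x)} u)/log r`. -/
def lelong {n : ℕ} (u : Cn n → EReal) (x : Cn n) : ℝ :=
  liminf (fun r : ℝ => (⨆ w ∈ ball x r, u w).toReal / Real.log r) (𝓝[>] (0:ℝ))

/-- The exponential of an extended real number, valued in `ℝ≥0∞`. -/
def expE (x : EReal) : ℝ≥0∞ :=
  if x = ⊥ then 0 else if x = ⊤ then ⊤ else ENNReal.ofReal (Real.exp x.toReal)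

/-- The complex singularity exponent of `u` over a set `s`:
`sup { c ≥ 0 : e^{-2cu} ∈ L¹(s) }`. -/
def cseOn {n : ℕ} (u : Cn n → EReal) (s : Set (Cn n)) : ℝ :=
  sSup {c : ℝ | 0 ≤ c ∧ ∫⁻ x in s, expE ((((-2 : ℝ) * c : ℝ) : EReal) * u x) < ⊤}

/-- The complex singularity exponent of `u` at a point `x`:
`sup { c ≥ 0 : e^{-2cu} ∈ L¹(U) for some neighbourhood U of x }`. -/
def csePt {n : ℕ} (u : Cn n → EReal) (x : Cn n) : ℝ :=
  sSup {c : ℝ | 0 ≤ c ∧ ∃ U ∈ 𝓝 x, ∫⁻ y in U, expE ((((-2 : ℝ) * c : ℝ) : EReal) * u y) < ⊤}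

/-- The integrability index: the inverse of the complex singularity exponent. -/
def iota {n : ℕ} (u : Cn n → EReal) (x : Cn n) : ℝ := (csePt u x)⁻¹

/-- The increasing rearrangement `u_*(s) = inf { t : |{u < t}| > s }` (real-valued case). -/
def rearr {N : ℕ} (u : Rn N → ℝ) (Ω : Set (Rn N)) (s : ℝ) : ℝ :=
  sInf {t : ℝ | ENNReal.ofReal s < volume {x ∈ Ω | u x < t}}

/-- The essential supremum of a real-valued function on `Ω`. -/
def essSupR {N : ℕ} (u : Rn N → ℝ) (Ω : Set (Rn N)) : ℝ :=
  sInf {t : ℝ | volume {x ∈ Ω | t < u x} = 0}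

/-- The increasing rearrangement on `[0,|Ω|]`, equal to `ess sup u` at `s = |Ω|`. -/
def rearrFull {N : ℕ} (u : Rn N → ℝ) (Ω : Set (Rn N)) (s : ℝ) : ℝ :=
  if s < (volume Ω).toReal then rearr u Ω s else essSupR u Ω

/-- The increasing rearrangement (EReal-valued case on ℂⁿ). -/
def rearrE {n : ℕ} (u : Cn n → EReal) (Ω : Set (Cn n)) (s : ℝ) : EReal :=
  sInf ((fun t : ℝ => (t : EReal)) ''
    {t : ℝ | ENNReal.ofReal s < volume {x ∈ Ω | u x < (t : EReal)}})

/-- The Schwarz symmetrization `û(x) = u_*(a_N |x|^N)` (real-valued case). -/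
def schwarz {N : ℕ} (u : Rn N → ℝ) (Ω : Set (Rn N)) (x : Rn N) : ℝ :=
  rearr u Ω ((volume (ball (0 : Rn N) ‖x‖)).toReal)

/-- The Schwarz symmetrization `û(x) = u_*(a_{2n} |x|^{2n})` (EReal-valued case on ℂⁿ). -/
def schwarzE {n : ℕ} (u : Cn n → EReal) (Ω : Set (Cn n)) (x : Cn n) : EReal :=
  rearrE u Ω ((volume (ball (0 : Cn n) ‖x‖)).toReal)


open scoped Classical

/-- The function `u(z) = log(|z₁|² + |z₂|^{1/2})` on `ℂ²` (with value `−∞` at `0`). -/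
def u19 : Cn 2 → EReal := fun z =>
  if z = 0 then (⊥ : EReal)
  else ((Real.log (‖z 0‖ ^ 2 + ‖z 1‖ ^ ((1 : ℝ) / 2)) : ℝ) : EReal)

/-!
For `R < 1` the sublevel set `{u < 2 log R}` of the ball is `{|z₂| < ((R² − |z₁|²)₊)²}`;
integrating the areas of the `z₂`-discs over `z₁` in polar coordinates gives its volume
`2π² ∫₀^R (R² − r²)⁴ r dr = π² R¹⁰ / 5`. So the distribution function of `u` is `π² e^{5t} / 5`
for `t < 0`, its increasing rearrangement is `s ↦ log (5 s / π²) / 5`, and since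
`|B_ρ| = π² ρ⁴ / 2` in `ℂ²`, the symmetrization is `û(x) = (log (5/2) + 4 log ‖x‖) / 5` near `0`,
whose Lelong number is `4/5`.
-/

theorem tendsto_div_affine_atBot (a b c : ℝ) {d : ℝ} (hd : d ≠ 0) :
    Tendsto (fun t : ℝ => (a + b * t) / (c + d * t)) atBot (𝓝 (b / d)) := by
  have hlim : Tendsto (fun t : ℝ => (a * t⁻¹ + b) / (c * t⁻¹ + d)) atBot (𝓝 (b / d)) := by
    have hinv := tendsto_inv_atBot_zero (𝕜 := ℝ)
    have hnum : Tendsto (fun t : ℝ => a * t⁻¹ + b) atBot (𝓝 b) := by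
      simpa using (hinv.const_mul a).add_const b
    have hden : Tendsto (fun t : ℝ => c * t⁻¹ + d) atBot (𝓝 d) := by
      simpa using (hinv.const_mul c).add_const d
    exact hnum.div hden hd
  refine hlim.congr' ?_
  filter_upwards [eventually_lt_atBot 0] with t ht
  rw [← mul_div_mul_right _ _ ht.ne]
  congr 1 <;> field_simp [ht.ne]

theorem Real.sqrt_lt_iff_lt_sq_max {a c : ℝ} (ha : 0 ≤ a) : √a < c ↔ a < max c 0 ^ 2 := by
  rcases le_or_gt c 0 with hc | hc
  · rw [max_eq_right hc]
    constructor <;> intro h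
    · linarith [Real.sqrt_nonneg a]
    · linarith
  · rw [max_eq_left hc.le, Real.sqrt_lt' hc]

theorem Complex.integral_comp_norm (g : ℝ → ℝ) :
    ∫ x : ℂ, g ‖x‖ = 2 * Real.pi * ∫ r in Set.Ioi (0 : ℝ), r * g r := by
  have hball : volume.real (ball (0 : ℂ) 1) = Real.pi := by
    simp [measureReal_def]
  rw [integral_fun_norm_addHaar volume g, Complex.finrank_real_complex, hball]
  simp only [smul_eq_mul, nsmul_eq_mul]
  norm_num [integral_const_mul]
  ring

theorem integral_sq_sub_sq_pow_mul (R : ℝ) (n : ℕ) :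
    ∫ r in (0 : ℝ)..R, (R ^ 2 - r ^ 2) ^ n * r = (R ^ 2) ^ (n + 1) / (2 * (n + 1)) := by
  have hderiv (x : ℝ) : HasDerivAt (fun r => -(R ^ 2 - r ^ 2) ^ (n + 1) / (2 * (n + 1)))
      ((R ^ 2 - x ^ 2) ^ n * x) x := by
    refine ((((hasDerivAt_pow 2 x).const_sub (R ^ 2)).pow (n + 1)).neg.div_const
      (2 * (n + 1) : ℝ)).congr_deriv ?_
    field_simp
    push_cast
    ring
  rw [intervalIntegral.integral_eq_sub_of_hasDerivAt (fun x _ => hderiv x)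
    ((by fun_prop : Continuous fun r : ℝ => (R ^ 2 - r ^ 2) ^ n * r).intervalIntegrable _ _)]
  simp
  ring

theorem measurePreserving_Cn_two_coords :
    MeasurePreserving (fun z : Cn 2 => (z 0, z 1)) volume (volume.prod volume) := by
  have hofLp : MeasurePreserving (WithLp.ofLp : Cn 2 → (Fin 2 → ℂ)) volume
      (Measure.pi fun _ => volume) := by
    refine ⟨WithLp.measurable_ofLp _ _, ?_⟩
    change Measure.map _ (Measure.map (WithLp.toLp 2) _) = _
    rw [Measure.map_map (WithLp.measurable_ofLp _ _) (WithLp.measurable_toLp _ _)]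
    exact Measure.map_id
  exact (measurePreserving_piFinTwo fun _ => volume).comp hofLp

theorem Cn_two_norm_lt_iff (z : Cn 2) {ρ : ℝ} (hρ : 0 ≤ ρ) :
    ‖z‖ < ρ ↔ ‖z 0‖ ^ 2 + ‖z 1‖ ^ 2 < ρ ^ 2 := by
  rw [← pow_lt_pow_iff_left₀ (norm_nonneg z) hρ two_ne_zero, EuclideanSpace.norm_sq_eq,
    Fin.sum_univ_two]

theorem volume_Cn_two_setOf_norm_lt_comp_norm (F : ℝ → ℝ) (hF : Continuous F)
    (hF_nonneg : 0 ≤ F) {R : ℝ} (hR : 0 ≤ R) (hF_zero : ∀ r, R ≤ r → F r = 0) :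
    volume {z : Cn 2 | ‖z 1‖ < F ‖z 0‖}
      = ENNReal.ofReal (2 * Real.pi ^ 2 * ∫ r in (0 : ℝ)..R, F r ^ 2 * r) := by
  set S : Set (ℂ × ℂ) := {p | ‖p.2‖ < F ‖p.1‖}
  have hS : MeasurableSet S :=
    (isOpen_lt (by fun_prop) (hF.comp (by fun_prop))).measurableSet
  have hslice (x : ℂ) :
      volume (Prod.mk x ⁻¹' S) = ENNReal.ofReal (Real.pi * F ‖x‖ ^ 2) := by
    have : Prod.mk x ⁻¹' S = ball 0 (F ‖x‖) := by ext y; simp [S]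
    rw [this, Complex.volume_ball, ← ENNReal.ofReal_pow (hF_nonneg _),
      ← ENNReal.ofReal_coe_nnreal, ← ENNReal.ofReal_mul (by positivity), mul_comm,
      NNReal.coe_real_pi]
  have hsupp : HasCompactSupport (fun x : ℂ => Real.pi * F ‖x‖ ^ 2) :=
    HasCompactSupport.intro (isCompact_closedBall 0 R) fun x hx => by
      rw [hF_zero _ (by simpa using hx : R < ‖x‖).le]; ring
  have hint : Integrable (fun x : ℂ => Real.pi * F ‖x‖ ^ 2) :=
    (by fun_prop : Continuous _).integrable_of_hasCompactSupport hsupp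
  change volume ((fun z : Cn 2 => (z 0, z 1)) ⁻¹' S) = _
  rw [measurePreserving_Cn_two_coords.measure_preimage hS.nullMeasurableSet,
    Measure.prod_apply hS]
  simp_rw [hslice]
  rw [← ofReal_integral_eq_lintegral_ofReal hint (.of_forall fun _ => by positivity),
    Complex.integral_comp_norm (fun r => Real.pi * F r ^ 2),
    setIntegral_eq_of_subset_of_forall_sdiff_eq_zero measurableSet_Ioi Set.Ioc_subset_Ioi_self
      fun r hr => by rw [hF_zero r (not_le.1 fun h => hr.2 ⟨hr.1, h⟩).le]; ring,
    ← intervalIntegral.integral_of_le hR]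
  congr 1
  rw [← intervalIntegral.integral_const_mul, ← intervalIntegral.integral_const_mul]
  congr 1 with r
  ring

theorem volume_ball_Cn_two {ρ : ℝ} (hρ : 0 ≤ ρ) :
    volume (ball (0 : Cn 2) ρ) = ENNReal.ofReal (Real.pi ^ 2 / 2 * ρ ^ 4) := by
  have hball : ball (0 : Cn 2) ρ = {z | ‖z 1‖ < √(ρ ^ 2 - ‖z 0‖ ^ 2)} := by
    ext z
    rw [mem_ball_zero_iff, Cn_two_norm_lt_iff z hρ, Set.mem_ofPred_eq,
      Real.lt_sqrt (norm_nonneg _)]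
    constructor <;> intro h <;> linarith
  rw [hball, volume_Cn_two_setOf_norm_lt_comp_norm (fun s => √(ρ ^ 2 - s ^ 2)) (by fun_prop)
    (fun _ => Real.sqrt_nonneg _) hρ fun r hr => Real.sqrt_eq_zero_of_nonpos (by nlinarith)]
  have hintegrand :
      ∀ r ∈ Set.uIcc 0 ρ, √(ρ ^ 2 - r ^ 2) ^ 2 * r = (ρ ^ 2 - r ^ 2) ^ 1 * r := by
    intro r hr
    rw [Set.uIcc_of_le hρ] at hr
    rw [Real.sq_sqrt (by nlinarith [hr.1, hr.2]), pow_one]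
  rw [intervalIntegral.integral_congr hintegrand, integral_sq_sub_sq_pow_mul]
  congr 1
  ring

theorem rearrE_eq_of_lt_volume_iff {n : ℕ} {u : Cn n → EReal} {Ω : Set (Cn n)} {s t₀ : ℝ}
    (h : ∀ t : ℝ, ENNReal.ofReal s < volume {x ∈ Ω | u x < t} ↔ t₀ < t) :
    rearrE u Ω s = t₀ := by
  have hset : {t : ℝ | ENNReal.ofReal s < volume {x ∈ Ω | u x < t}} = Set.Ioi t₀ := Set.ext h
  rw [rearrE, hset, EReal.image_coe_Ioi, csInf_Ioo (EReal.coe_lt_top _)]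

theorem volume_sublevel_mono {n : ℕ} {u : Cn n → EReal} {Ω : Set (Cn n)} {t t' : ℝ}
    (h : t ≤ t') :
    volume {x ∈ Ω | u x < (t : EReal)} ≤ volume {x ∈ Ω | u x < (t' : EReal)} :=
  measure_mono fun _ hx => ⟨hx.1, hx.2.trans_le (EReal.coe_le_coe_iff.2 h)⟩

theorem sq_norm_add_rpow_norm_pos {z : Cn 2} (hz : z ≠ 0) :
    0 < ‖z 0‖ ^ 2 + ‖z 1‖ ^ ((1 : ℝ) / 2) := by
  by_cases h0 : z 0 = 0
  · have h1 : z 1 ≠ 0 := fun h1 => hz (by ext i; fin_cases i <;> simp [h0, h1])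
    rw [h0, norm_zero]
    have := Real.rpow_pos_of_pos (norm_pos_iff.2 h1) ((1 : ℝ) / 2)
    positivity
  · have := norm_pos_iff.2 h0
    positivity

theorem u19_lt_two_log_iff (z : Cn 2) {R : ℝ} (hR : 0 < R) :
    u19 z < ((2 * Real.log R : ℝ) : EReal) ↔
      ‖z 0‖ ^ 2 + ‖z 1‖ ^ ((1 : ℝ) / 2) < R ^ 2 := by
  rw [u19]
  split_ifs with hz
  · subst hz
    exact iff_of_true (EReal.bot_lt_coe _)
      (by simpa [Real.zero_rpow one_half_pos.ne'] using pow_pos hR 2)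
  · have hlog : 2 * Real.log R = Real.log (R ^ 2) := by rw [Real.log_pow]; norm_num
    rw [EReal.coe_lt_coe_iff, hlog,
      Real.log_lt_log_iff (sq_norm_add_rpow_norm_pos hz) (by positivity)]

theorem norm_lt_one_of_sq_norm_add_rpow_norm_lt_one {z : Cn 2}
    (h : ‖z 0‖ ^ 2 + ‖z 1‖ ^ ((1 : ℝ) / 2) < 1) : ‖z‖ < 1 := by
  rw [← Real.sqrt_eq_rpow] at h
  rw [Cn_two_norm_lt_iff z zero_le_one]
  have hs := Real.sqrt_nonneg ‖z 1‖
  have hsq := Real.sq_sqrt (norm_nonneg (z 1))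
  -- `‖z 1‖ ^ 2 = (√‖z 1‖) ^ 4 ≤ √‖z 1‖` because `√‖z 1‖ < 1`
  nlinarith [sq_nonneg (‖z 0‖), pow_le_pow_left₀ hs (show √‖z 1‖ ≤ 1 by nlinarith) 3]

theorem sublevel_u19_eq {R : ℝ} (hR0 : 0 < R) (hR1 : R ≤ 1) :
    {z ∈ ball (0 : Cn 2) 1 | u19 z < ((2 * Real.log R : ℝ) : EReal)}
      = {z : Cn 2 | ‖z 0‖ ^ 2 + ‖z 1‖ ^ ((1 : ℝ) / 2) < R ^ 2} := by
  ext z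
  rw [Set.mem_sep_iff, u19_lt_two_log_iff z hR0, Set.mem_ofPred_eq, mem_ball_zero_iff,
    and_iff_right_iff_imp]
  intro h
  exact norm_lt_one_of_sq_norm_add_rpow_norm_lt_one (h.trans_le (by nlinarith))

theorem volume_sublevel_u19 {R : ℝ} (hR0 : 0 < R) (hR1 : R ≤ 1) :
    volume {z ∈ ball (0 : Cn 2) 1 | u19 z < ((2 * Real.log R : ℝ) : EReal)}
      = ENNReal.ofReal (2 * Real.pi ^ 2 * ∫ r in (0 : ℝ)..R, (R ^ 2 - r ^ 2) ^ 4 * r) := by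
  have hset : {z : Cn 2 | ‖z 0‖ ^ 2 + ‖z 1‖ ^ ((1 : ℝ) / 2) < R ^ 2}
      = {z | ‖z 1‖ < max (R ^ 2 - ‖z 0‖ ^ 2) 0 ^ 2} := by
    ext z
    rw [Set.mem_ofPred_eq, Set.mem_ofPred_eq, ← Real.sqrt_eq_rpow,
      ← Real.sqrt_lt_iff_lt_sq_max (norm_nonneg _)]
    constructor <;> intro h <;> linarith
  rw [sublevel_u19_eq hR0 hR1, hset,
    volume_Cn_two_setOf_norm_lt_comp_norm (fun s => max (R ^ 2 - s ^ 2) 0 ^ 2) (by fun_prop)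
      (fun _ => sq_nonneg _) hR0.le
      fun r hr => by simp [max_eq_right (by nlinarith : R ^ 2 - r ^ 2 ≤ 0)]]
  congr 2
  refine intervalIntegral.integral_congr fun r hr => ?_
  rw [Set.uIcc_of_le hR0.le] at hr
  simp only [max_eq_left (by nlinarith [hr.1, hr.2] : 0 ≤ R ^ 2 - r ^ 2)]
  ring

theorem two_pi_sq_mul_integral_sq_sub_sq_pow_four_mul (R : ℝ) :
    2 * Real.pi ^ 2 * (∫ r in (0 : ℝ)..R, (R ^ 2 - r ^ 2) ^ 4 * r)
      = Real.pi ^ 2 / 5 * R ^ 10 := by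
  rw [integral_sq_sub_sq_pow_mul]
  ring

theorem volume_sublevel_u19_of_neg {t : ℝ} (ht : t < 0) :
    volume {z ∈ ball (0 : Cn 2) 1 | u19 z < (t : EReal)}
      = ENNReal.ofReal (Real.pi ^ 2 / 5 * Real.exp (5 * t)) := by
  have hR : 2 * Real.log (Real.exp (t / 2)) = t := by rw [Real.log_exp]; ring
  have h := volume_sublevel_u19 (Real.exp_pos (t / 2)) (Real.exp_le_one_iff.2 (by linarith))
  rw [hR, two_pi_sq_mul_integral_sq_sub_sq_pow_four_mul, ← Real.exp_nat_mul] at h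
  rw [h]
  norm_num
  ring_nf

theorem rearrE_u19 {t₀ : ℝ} (ht₀ : t₀ < 0) :
    rearrE u19 (ball (0 : Cn 2) 1) (Real.pi ^ 2 / 5 * Real.exp (5 * t₀)) = t₀ := by
  refine rearrE_eq_of_lt_volume_iff fun t => ?_
  rcases lt_or_ge t 0 with ht | ht
  · rw [volume_sublevel_u19_of_neg ht, ENNReal.ofReal_lt_ofReal_iff (by positivity),
      mul_lt_mul_iff_right₀ (by positivity), Real.exp_lt_exp]
    constructor <;> intro h <;> linarith
  · refine iff_of_true ?_ (ht₀.trans_le ht)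
    -- no closed form for `t ≥ 0`: compare with the level `t₀ / 2 ∈ (t₀, 0)`
    calc ENNReal.ofReal (Real.pi ^ 2 / 5 * Real.exp (5 * t₀))
        < ENNReal.ofReal (Real.pi ^ 2 / 5 * Real.exp (5 * (t₀ / 2))) := by
          rw [ENNReal.ofReal_lt_ofReal_iff (by positivity), mul_lt_mul_iff_right₀ (by positivity),
            Real.exp_lt_exp]
          linarith
      _ = _ := (volume_sublevel_u19_of_neg (by linarith)).symm
      _ ≤ _ := volume_sublevel_mono (by linarith)

theorem schwarzE_u19_zero : schwarzE u19 (ball (0 : Cn 2) 1) 0 = ⊥ := by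
  rw [EReal.eq_bot_iff_forall_lt]
  intro y
  obtain ⟨t, ht0, hty⟩ : ∃ t : ℝ, t < 0 ∧ t < y :=
    ⟨min y 0 - 1, by linarith [min_le_right y 0], by linarith [min_le_left y 0]⟩
  refine lt_of_le_of_lt (sInf_le ⟨t, ?_, rfl⟩) (EReal.coe_lt_coe_iff.2 hty)
  rw [Set.mem_ofPred_eq, norm_zero, ball_zero, measure_empty, ENNReal.toReal_zero,
    ENNReal.ofReal_zero, volume_sublevel_u19_of_neg ht0]
  exact ENNReal.ofReal_pos.2 (by positivity)

theorem schwarzE_u19 {x : Cn 2} (hx0 : x ≠ 0) (hx : ‖x‖ < 1 / 2) :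
    schwarzE u19 (ball (0 : Cn 2) 1) x = ((Real.log (5 / 2) + 4 * Real.log ‖x‖) / 5 : ℝ) := by
  have hpos : 0 < 5 / 2 * ‖x‖ ^ 4 := by have := norm_pos_iff.2 hx0; positivity
  have hexp :
      Real.exp (5 * ((Real.log (5 / 2) + 4 * Real.log ‖x‖) / 5)) = 5 / 2 * ‖x‖ ^ 4 := by
    rw [mul_div_cancel₀ _ (by norm_num), Real.exp_add, Real.exp_log (by norm_num),
      show (4 : ℝ) * Real.log ‖x‖ = Real.log (‖x‖ ^ 4) by rw [Real.log_pow]; norm_num,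
      Real.exp_log (by positivity)]
  have hneg : (Real.log (5 / 2) + 4 * Real.log ‖x‖) / 5 < 0 := by
    have : Real.exp (5 * ((Real.log (5 / 2) + 4 * Real.log ‖x‖) / 5)) < 1 := by
      rw [hexp]
      nlinarith [pow_lt_pow_left₀ hx (norm_nonneg x) (by norm_num : 4 ≠ 0)]
    linarith [Real.exp_lt_one_iff.1 this]
  rw [schwarzE, volume_ball_Cn_two (norm_nonneg x), ENNReal.toReal_ofReal (by positivity),
    ← rearrE_u19 hneg, hexp]
  congr 1
  ring

theorem iSup_ball_schwarzE_u19 {r : ℝ} (hr0 : 0 < r) (hr : r < 1 / 2) :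
    ⨆ w ∈ ball (0 : Cn 2) r, schwarzE u19 (ball (0 : Cn 2) 1) w
      = ((Real.log (5 / 2) + 4 * Real.log r) / 5 : ℝ) := by
  apply le_antisymm
  · refine iSup₂_le fun w hw => ?_
    rw [mem_ball_zero_iff] at hw
    rcases eq_or_ne w 0 with rfl | hw0
    · rw [schwarzE_u19_zero]
      exact bot_le
    · rw [schwarzE_u19 hw0 (hw.trans hr), EReal.coe_le_coe_iff]
      gcongr
  · have hcont : ContinuousAt
        (fun ρ : ℝ => (((Real.log (5 / 2) + 4 * Real.log ρ) / 5 : ℝ) : EReal)) r :=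
      continuous_coe_real_ereal.continuousAt.comp
        (((Real.continuousAt_log hr0.ne').const_mul 4).const_add _ |>.div_const 5)
    refine le_of_tendsto (hcont.tendsto.mono_left (nhdsWithin_le_nhds (s := Set.Iio r))) ?_
    filter_upwards [Ioo_mem_nhdsLT hr0] with ρ hρ
    set w : Cn 2 := EuclideanSpace.single 0 (ρ : ℂ)
    have hnorm : ‖w‖ = ρ := by
      rw [PiLp.norm_single, Complex.norm_real, Real.norm_of_nonneg hρ.1.le]
    have hne : w ≠ 0 := by
      rw [← norm_pos_iff, hnorm]; exact hρ.1
    refine le_iSup₂_of_le w ?_ ?_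
    · rw [mem_ball_zero_iff, hnorm]; exact hρ.2
    · rw [schwarzE_u19 hne (by rw [hnorm]; linarith [hρ.2]), hnorm]

theorem lelong_schwarzE_u19 : lelong (schwarzE u19 (ball (0 : Cn 2) 1)) 0 = 4 / 5 := by
  have hsup : ∀ᶠ r in 𝓝[>] (0 : ℝ),
      (⨆ w ∈ ball (0 : Cn 2) r, schwarzE u19 (ball (0 : Cn 2) 1) w).toReal / Real.log r
        = (Real.log (5 / 2) / 5 + 4 / 5 * Real.log r) / (0 + 1 * Real.log r) := by
    filter_upwards [Ioo_mem_nhdsGT (by norm_num : (0 : ℝ) < 1 / 2)] with r hr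
    rw [iSup_ball_schwarzE_u19 hr.1 hr.2, EReal.toReal_coe]
    ring
  rw [lelong, liminf_congr hsup]
  refine Tendsto.liminf_eq ?_
  have hlim := (tendsto_div_affine_atBot (Real.log (5 / 2) / 5) (4 / 5) 0 one_ne_zero).comp
    Real.tendsto_log_nhdsGT_zero
  rwa [div_one] at hlim

theorem tendsto_log_div_log_volume_sublevel_u19 :
    Tendsto (fun R : ℝ =>
        2 * Real.log R / ((1 / 4) * Real.log
          ((volume {z ∈ ball (0 : Cn 2) 1 | u19 z < ((2 * Real.log R : ℝ) : EReal)}).toReal)))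
      (𝓝[>] (0 : ℝ)) (𝓝 (4 / 5)) := by
  have hlim := (tendsto_div_affine_atBot 0 2 (Real.log (Real.pi ^ 2 / 5) / 4)
    (by norm_num : (10 / 4 : ℝ) ≠ 0)).comp Real.tendsto_log_nhdsGT_zero
  rw [show (2 : ℝ) / (10 / 4) = 4 / 5 by norm_num] at hlim
  refine hlim.congr' ?_
  filter_upwards [Ioo_mem_nhdsGT (by norm_num : (0 : ℝ) < 1)] with R hR
  rw [Function.comp_apply, volume_sublevel_u19 hR.1 hR.2.le,
    two_pi_sq_mul_integral_sq_sub_sq_pow_four_mul, ENNReal.toReal_ofReal (by positivity),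
    Real.log_mul (by positivity) (pow_pos hR.1 10).ne', Real.log_pow]
  push_cast
  ring

/-- for `u(z) = log(|z₁|² + |z₂|^{1/2})` on the unit ball of `ℂ²`, the
sublevel set `{u < 2 log R}` has volume `2π² ∫₀^R (R²−r²)⁴ r dr = (π²/5) R¹⁰`, and
consequently the Lelong number of the Schwarz symmetrization at the origin is `4/5`. -/
theorem stmt19 :
    (∀ R : ℝ, 0 < R → R < 1 →
      volume {z ∈ ball (0 : Cn 2) 1 | u19 z < ((2 * Real.log R : ℝ) : EReal)}
        = ENNReal.ofReal (2 * Real.pi ^ 2 * ∫ r in (0 : ℝ)..R, (R ^ 2 - r ^ 2) ^ 4 * r)) ∧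
    (∀ R : ℝ, 2 * Real.pi ^ 2 * (∫ r in (0 : ℝ)..R, (R ^ 2 - r ^ 2) ^ 4 * r)
        = Real.pi ^ 2 / 5 * R ^ 10) ∧
    Tendsto (fun R : ℝ =>
        2 * Real.log R / ((1 / 4) * Real.log
          ((volume {z ∈ ball (0 : Cn 2) 1 | u19 z < ((2 * Real.log R : ℝ) : EReal)}).toReal)))
      (𝓝[>] (0 : ℝ)) (𝓝 (4 / 5)) ∧
    lelong (schwarzE u19 (ball (0 : Cn 2) 1)) 0 = 4 / 5 :=
  ⟨fun _ hR0 hR1 => volume_sublevel_u19 hR0 hR1.le, two_pi_sq_mul_integral_sq_sub_sq_pow_four_mul,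
    tendsto_log_div_log_volume_sublevel_u19, lelong_schwarzE_u19⟩

end
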